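/- For a coalition game ν : Finset(Fin d) → ℝ with d players, the Shapley values satisfy the efficiency axiom: the sum over all players i of φ_i(ν) equals ν(univ) − ν(∅), where φ_i(ν) = (1/d) · Σ_{S ⊆ univ \ {i}} (choose (d−1) |S|)⁻¹ · (ν(S ∪ {i}) − ν(S)). -/

import Mathlib

/-!
Summing the marginal contributions over all players, `ν T` appears with weight
`#T / d · C(d-1, #T-1)⁻¹` (from the terms `S = T.erase i`, `i ∈ T`) and with weight
`(d - #T) / d · C(d-1, #T)⁻¹` (from the terms `S = T`, `i ∉ T`). Both weights equal `C(d, #T)⁻¹`,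
except that the first vanishes at `T = ∅` and the second at `T = univ`, so everything cancels
except `ν univ - ν ∅`.
-/

open Finset

section DoubleCounting

variable {α M : Type*} [Fintype α] [DecidableEq α] [AddCommMonoid M]

theorem sum_powerset_erase_insert (i : α) (f : Finset α → Finset α → M) :
    ∑ S ∈ (univ.erase i).powerset, f S (insert i S) = ∑ T with i ∈ T, f (T.erase i) T :=
  sum_nbij' (insert i) (erase · i) (by simp) (by simp [subset_erase])
    (fun S hS ↦ erase_insert (by simpa [subset_erase] using hS))
    (fun T hT ↦ insert_erase (by simpa using hT))
    (fun S hS ↦ by rw [erase_insert (by simpa [subset_erase] using hS)])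

theorem sum_sum_powerset_erase_insert (f : ℕ → Finset α → M) :
    ∑ i, ∑ S ∈ (univ.erase i).powerset, f #S (insert i S) = ∑ T, #T • f (#T - 1) T := by
  calc ∑ i, ∑ S ∈ (univ.erase i).powerset, f #S (insert i S)
      = ∑ i, ∑ T with i ∈ T, f (#T - 1) T := by
        refine sum_congr rfl fun i _ ↦ ?_
        rw [sum_powerset_erase_insert i (fun S T ↦ f #S T)]
        exact sum_congr rfl fun T hT ↦ by rw [card_erase_of_mem (mem_filter.1 hT).2]
    _ = ∑ T, ∑ i ∈ T, f (#T - 1) T := sum_comm' (by simp)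
    _ = ∑ T, #T • f (#T - 1) T := by simp only [sum_const]

theorem sum_sum_powerset_erase (f : ℕ → Finset α → M) :
    ∑ i, ∑ S ∈ (univ.erase i).powerset, f #S S = ∑ T, #Tᶜ • f #T T := by
  rw [sum_comm' (t' := univ) (s' := compl) (by simp [subset_erase])]
  simp only [sum_const]

end DoubleCounting

theorem div_mul_inv_choose_pred {k : ℕ} (hk : k ≠ 0) (n : ℕ) :
    (k / n : ℝ) * ((n - 1).choose (k - 1) : ℝ)⁻¹ = (n.choose k : ℝ)⁻¹ := by
  obtain ⟨j, rfl⟩ := Nat.exists_eq_succ_of_ne_zero hk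
  rcases n with _ | m
  · simp
  have h : ((m + 1).choose (j + 1) : ℝ) = (m + 1) * m.choose j / (j + 1) := by
    rw [eq_div_iff (by positivity)]
    exact_mod_cast (Nat.add_one_mul_choose_eq m j).symm
  simp only [Nat.succ_eq_add_one, Nat.add_sub_cancel, h, div_eq_mul_inv, mul_inv, inv_inv]
  push_cast
  ring

theorem sub_div_mul_inv_choose {n k : ℕ} (hk : k < n) :
    ((n - k : ℕ) / n : ℝ) * ((n - 1).choose k : ℝ)⁻¹ = (n.choose k : ℝ)⁻¹ := by
  obtain ⟨m, rfl⟩ := Nat.exists_eq_succ_of_ne_zero (by omega : n ≠ 0)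
  have hk' : ((m + 1 - k : ℕ) : ℝ) ≠ 0 := by norm_cast; omega
  have h : ((m + 1).choose k : ℝ) = m.choose k * (m + 1) / (m + 1 - k : ℕ) := by
    rw [eq_div_iff hk']
    exact_mod_cast (Nat.choose_mul_succ_eq m k).symm
  simp only [Nat.succ_eq_add_one, Nat.add_sub_cancel, h, div_eq_mul_inv, mul_inv, inv_inv]
  push_cast
  ring

theorem div_mul_inv_choose_pred_sub_div_mul_inv_choose {n k : ℕ} (hk : k ≤ n) :
    (k / n : ℝ) * ((n - 1).choose (k - 1) : ℝ)⁻¹ - ((n - k : ℕ) / n : ℝ) * ((n - 1).choose k : ℝ)⁻¹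
      = (if k = n then 1 else 0) - (if k = 0 then 1 else 0) := by
  rcases Nat.eq_zero_or_pos k with rfl | hk0
  · rcases Nat.eq_zero_or_pos n with rfl | hn
    · simp
    · rw [sub_div_mul_inv_choose hn]; simp [hn.ne]
  · rcases hk.lt_or_eq with hkn | rfl
    · rw [div_mul_inv_choose_pred hk0.ne', sub_div_mul_inv_choose hkn]; simp [hkn.ne, hk0.ne']
    · rw [div_mul_inv_choose_pred hk0.ne']; simp [hk0.ne']

theorem shapley_efficiency_general (d : ℕ) (ν : Finset (Fin d) → ℝ) :
    ∑ i : Fin d, ((1 / d : ℝ) *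
      ∑ S ∈ (Finset.univ.erase i).powerset,
        ((Nat.choose (d - 1) S.card : ℝ))⁻¹ * (ν (insert i S) - ν S)) =
    ν Finset.univ - ν ∅ := by
  let w (k : ℕ) : ℝ := ((d - 1).choose k : ℝ)⁻¹
  calc _ = (1 / d : ℝ) * (∑ i, ∑ S ∈ (univ.erase i).powerset, w #S * ν (insert i S)
        - ∑ i, ∑ S ∈ (univ.erase i).powerset, w #S * ν S) := by
          simp only [w, mul_sub, sum_sub_distrib, mul_sum]
    _ = (1 / d : ℝ) * (∑ T, #T • (w (#T - 1) * ν T) - ∑ T, #Tᶜ • (w #T * ν T)) := by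
          rw [sum_sum_powerset_erase_insert (fun k T ↦ w k * ν T),
            sum_sum_powerset_erase (fun k T ↦ w k * ν T)]
    _ = ∑ T, ((if T = univ then 1 else 0) - (if T = ∅ then 1 else 0)) * ν T := by
          rw [mul_sub, mul_sum, mul_sum, ← sum_sub_distrib]
          refine sum_congr rfl fun T _ ↦ ?_
          have hT : #T ≤ d := card_le_univ T |>.trans_eq (Fintype.card_fin d)
          simp only [← card_eq_iff_eq_univ, ← card_eq_zero, card_compl, Fintype.card_fin,
            ← div_mul_inv_choose_pred_sub_div_mul_inv_choose hT]
          simp only [nsmul_eq_mul, w]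
          ring
    _ = ν univ - ν ∅ := by
          simp [sub_mul, sum_sub_distrib]

theorem shapley_efficiency (d : ℕ) (hd : 1 ≤ d) (ν : Finset (Fin d) → ℝ) :
    ∑ i : Fin d, ((1 / d : ℝ) *
      ∑ S ∈ (Finset.univ.erase i).powerset,
        ((Nat.choose (d - 1) S.card : ℝ))⁻¹ * (ν (insert i S) - ν S)) =
    ν Finset.univ - ν ∅ :=
  shapley_efficiency_general d ν
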